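/- Let A be a left brace of cardinality p^n satisfying Properties 1' and 1''. If a ∈ ann(p^i), then a^{∘ p} ∈ ann(p^{i−1}), and consequently a^{∘ p^i} = 0 (the identity of the group (A,∘)). -/
import Mathlib


universe u

class LeftBrace (A : Type u) extends AddCommGroup A where
  circ : A → A → A
  circ_assoc : ∀ a b c : A, circ (circ a b) c = circ a (circ b c)
  zero_circ : ∀ a : A, circ 0 a = a
  circ_zero : ∀ a : A, circ a 0 = a
  cinv : A → A
  cinv_circ : ∀ a : A, circ (cinv a) a = 0
  circ_add : ∀ a b c : A, circ a (b + c) + a = circ a b + circ a c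

namespace LeftBrace

variable {A : Type u} [LeftBrace A]

/-- `a * b = a∘b - a - b`. -/
def star (a b : A) : A := circ a b - a - b

/-- `cpow a j` is the `j`-th power of `a` in the group `(A, ∘)` (whose identity is `0`). -/
def cpow (a : A) : ℕ → A
  | 0 => 0
  | n+1 => circ a (cpow a n)

/-- `eFun a i = e_{i+1}(a)`: `eFun a 0 = a`, `eFun a (i+1) = a * eFun a i`. -/
def eFun (a : A) : ℕ → A
  | 0 => a
  | i+1 => star a (eFun a i)

/-- `eStar a b i = e_{i+1}'(a,b)`: `eStar a b 0 = a*b`, `eStar a b (i+1) = a * eStar a b i`. -/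
def eStar (a b : A) : ℕ → A
  | 0 => star a b
  | i+1 => star a (eStar a b i)

/-- `nSet A m = mA = {m a : a ∈ A}`. -/
def nSet (A : Type u) [LeftBrace A] (m : ℕ) : Set A := {x | ∃ a : A, m • a = x}

/-- `annSet A m = ann(m) = {a ∈ A : m a = 0}`. -/
def annSet (A : Type u) [LeftBrace A] (m : ℕ) : Set A := {a : A | m • a = 0}

/-- An ideal of a brace: an additive subgroup closed under `i*a` and `a*i`. -/
def IsBraceIdeal (I : Set A) : Prop :=
  0 ∈ I ∧ (∀ x ∈ I, ∀ y ∈ I, x + y ∈ I) ∧ (∀ x ∈ I, -x ∈ I) ∧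
    ∀ x ∈ I, ∀ a : A, star x a ∈ I ∧ star a x ∈ I

/-- Property 1': `e'_{⌊(p-1)/4⌋}(a,b) ∈ pA` for all `a, b`. -/
def Prop1' (A : Type u) [LeftBrace A] (p : ℕ) : Prop :=
  ∀ a b : A, eStar a b ((p-1)/4 - 1) ∈ nSet A p

/-- Property 1'': `e'_{⌊(p-1)/4⌋}(a, ann(p^i)) ⊆ ann(p^{i-1})` for all `i ≥ 1`. -/
def Prop1'' (A : Type u) [LeftBrace A] (p : ℕ) : Prop :=
  ∀ i : ℕ, 1 ≤ i → ∀ a x : A, (p^i) • x = 0 →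
    (p^(i-1)) • eStar a x ((p-1)/4 - 1) = 0

lemma star_add' (a b c : A) : star a (b + c) = star a b + star a c := by
  have h := circ_add a b c
  have h2 : circ a (b + c) = circ a b + circ a c - a := by rw [← h]; abel
  unfold star
  rw [h2]; abel

lemma star_zero' (a : A) : star a 0 = 0 := by simp [star, circ_zero]

/-- `star a` as an additive hom. -/
def starHom (a : A) : A →+ A where
  toFun := star a
  map_zero' := star_zero' a
  map_add' := star_add' a

lemma star_nsmul' (a : A) (m : ℕ) (x : A) : star a (m • x) = m • star a x := by
  induction m with
  | zero => simp [star_zero']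
  | succ m ih => rw [succ_nsmul, star_add', ih, succ_nsmul]

lemma star_sum' (a : A) {ι : Type*} (s : Finset ι) (f : ι → A) :
    star a (∑ j ∈ s, f j) = ∑ j ∈ s, star a (f j) :=
  map_sum (starHom a) f s

lemma ann_star' (a : A) (m : ℕ) (x : A) (h : m • x = 0) : m • star a x = 0 := by
  rw [← star_nsmul', h, star_zero']

lemma circ_eq' (a b : A) : circ a b = a + b + star a b := by unfold star; abel

lemma cpow_eq_sum (a : A) (k : ℕ) :
    cpow a k = ∑ j ∈ Finset.range k, (k.choose (j+1)) • eFun a j := by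
  induction k with
  | zero => simp [cpow]
  | succ k ih =>
    have hs : star a (cpow a k)
        = ∑ j ∈ Finset.range k, (k.choose (j+1)) • eFun a (j+1) := by
      rw [ih, star_sum']
      refine Finset.sum_congr rfl fun j _ => ?_
      rw [star_nsmul']
      rfl
    have hc : cpow a (k+1) = a + cpow a k + star a (cpow a k) := by
      show circ a (cpow a k) = _
      rw [circ_eq']
    rw [hc, hs, ih]
    have hsplit : ∑ j ∈ Finset.range (k+1), ((k+1).choose (j+1)) • eFun a j
        = (∑ j ∈ Finset.range (k+1), (k.choose j) • eFun a j)
          + ∑ j ∈ Finset.range (k+1), (k.choose (j+1)) • eFun a j := by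
      rw [← Finset.sum_add_distrib]
      refine Finset.sum_congr rfl fun j _ => ?_
      rw [← add_smul, ← Nat.choose_succ_succ]
    rw [hsplit]
    have h1 : ∑ j ∈ Finset.range (k+1), (k.choose (j+1)) • eFun a j
        = ∑ j ∈ Finset.range k, (k.choose (j+1)) • eFun a j := by
      rw [Finset.sum_range_succ, Nat.choose_succ_self, zero_smul, add_zero]
    have h2 : ∑ j ∈ Finset.range (k+1), (k.choose j) • eFun a j
        = (∑ j ∈ Finset.range k, (k.choose (j+1)) • eFun a (j+1)) + a := by
      rw [Finset.sum_range_succ']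
      try simp [eFun]
    rw [h1, h2]
    abel

lemma eFun_eq_eStar (a : A) (m : ℕ) : eFun a (m+1) = eStar a a m := by
  induction m with
  | zero => rfl
  | succ m ih => show star a _ = star a _; rw [ih]

lemma key_lemma {p : ℕ} (hp : p.Prime) (h2 : Prop1'' A p) (i : ℕ) (hi : 1 ≤ i)
    (a : A) (h : (p ^ i) • a = 0) : (p ^ (i-1)) • cpow a p = 0 := by
  have hann : ∀ j, (p ^ i) • eFun a j = 0 := by
    intro j; induction j with
    | zero => exact h
    | succ j ih => exact ann_star' a _ _ ih
  have hbase : (p ^ (i-1)) • eStar a a ((p-1)/4 - 1) = 0 := h2 i hi a a h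
  have hchain : ∀ d, (p ^ (i-1)) • eStar a a (((p-1)/4 - 1) + d) = 0 := by
    intro d; induction d with
    | zero => simpa using hbase
    | succ d ih => exact ann_star' a _ _ ih
  have hk_le : (p-1)/4 - 1 ≤ p - 2 := by
    have hd : (p-1)/4 ≤ p - 1 := Nat.div_le_self _ _
    omega
  have hp2 : 2 ≤ p := hp.two_le
  have hlast : (p ^ (i-1)) • eFun a (p-1) = 0 := by
    have hpe : p - 1 = (p - 2) + 1 := by omega
    rw [hpe, eFun_eq_eStar]
    obtain ⟨d, hd⟩ := Nat.exists_eq_add_of_le hk_le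
    rw [hd]; exact hchain d
  rw [cpow_eq_sum, Finset.smul_sum]
  apply Finset.sum_eq_zero
  intro j hj
  rw [Finset.mem_range] at hj
  rcases eq_or_lt_of_le (Nat.lt_succ_iff.mp (by omega : j < (p-1) + 1)) with hje | hjl
  · -- j = p - 1
    rw [hje]
    have : p.choose ((p-1)+1) = 1 := by
      have : (p-1)+1 = p := by omega
      rw [this, Nat.choose_self]
    rw [this, one_smul]
    exact hlast
  · -- j < p - 1, so p ∣ choose
    have hdvd : p ∣ p.choose (j+1) := hp.dvd_choose_self (by omega) (by omega)
    obtain ⟨c, hc⟩ := hdvd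
    rw [hc, smul_smul]
    have : p ^ (i-1) * (p * c) = c * p ^ i := by
      rw [← mul_assoc]
      have : p ^ (i-1) * p = p ^ i := by
        rw [← pow_succ]
        congr 1
        omega
      rw [this, mul_comm]
    rw [this, mul_smul, hann j, smul_zero]

lemma cpow_add' (a : A) (m n : ℕ) :
    cpow a (m + n) = circ (cpow a m) (cpow a n) := by
  induction m with
  | zero => rw [Nat.zero_add]; exact (zero_circ _).symm
  | succ m ih =>
    have he : m + 1 + n = (m + n) + 1 := by omega
    rw [he]
    show circ a (cpow a (m + n)) = circ (circ a (cpow a m)) (cpow a n)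
    rw [ih, circ_assoc]

lemma cpow_mul' (a : A) (m n : ℕ) :
    cpow a (m * n) = cpow (cpow a m) n := by
  induction n with
  | zero => simp [cpow]
  | succ n ih =>
    have he : m * (n + 1) = m + m * n := by ring
    rw [he, cpow_add', ih]
    rfl

lemma cpow_zero_left : ∀ m : ℕ, cpow (0 : A) m = 0 := by
  intro m; induction m with
  | zero => rfl
  | succ m ih => show circ 0 (cpow (0:A) m) = 0; rw [zero_circ, ih]

end LeftBrace

open LeftBrace in
/-- if `a ∈ ann(p^i)`, then `a^{∘p} ∈ ann(p^{i−1})` and `a^{∘p^i} = 0`. -/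
theorem statement11 {A : Type u} [LeftBrace A] (p n : ℕ) (hp : p.Prime)
    (hcard : Nat.card A = p ^ n) (h1 : Prop1' A p) (h2 : Prop1'' A p) :
    ∀ i : ℕ, ∀ a : A, (p ^ i) • a = 0 →
      (p ^ (i - 1)) • cpow a p = 0 ∧ cpow a (p ^ i) = 0 := by
  intro i
  induction i with
  | zero =>
    intro a h
    have ha : a = 0 := by simpa using h
    subst ha
    constructor
    · simp [cpow_zero_left]
    · simpa using cpow_zero_left (A := A) 1
  | succ i ih =>
    intro a h
    have hkey := key_lemma hp h2 (i+1) (by omega) a h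
    have hk' : (p ^ i) • cpow a p = 0 := by simpa using hkey
    refine ⟨by simpa using hkey, ?_⟩
    have h2' := (ih (cpow a p) hk').2
    rw [pow_succ', cpow_mul']
    exact h2'
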